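/- arXiv:2108.09097 — 5 statements merged into one kernel-verified Lean document; each statement's English description precedes it below -/
import Mathlib

section
/- Let H be a bialgebra over a commutative ring R and let τ : H → H be an R-linear involution that is an algebra morphism and is either a coalgebra morphism or a coalgebra antimorphism. Let p_1, …, p_k ∈ H be primitive elements with τ(p_i) = p_i for all i. Then for every integer a ≥ 1, the symmetrised product v := Σ_{σ ∈ S_k} p_{σ(1)}⋯p_{σ(k)} satisfies Ψ_a^+(v) = (a·1_R)^k · v and Ψ_a^−(v) = (a·1_R)^k · v. -/
open TensorProduct

/-- Convolution product `f * g := m ∘ (f ⊗ g) ∘ Δ` of linear endomorphisms of a bialgebra. -/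
noncomputable def convProd {R H : Type*} [CommRing R] [Ring H] [Bialgebra R H]
    (f g : H →ₗ[R] H) : H →ₗ[R] H :=
  LinearMap.mul' R H ∘ₗ TensorProduct.map f g ∘ₗ Coalgebra.comul

/-- `PsiAux τ n = (Ψ_{n+1}^+, Ψ_{n+1}^−)`: the hyperoctahedral riffle-shuffle operators,
defined by `Ψ_1^+ = id`, `Ψ_1^− = τ`, `Ψ_{a+1}^+ = id * Ψ_a^−`, `Ψ_{a+1}^− = τ * Ψ_a^+`. -/
noncomputable def PsiAux {R H : Type*} [CommRing R] [Ring H] [Bialgebra R H]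
    (τ : H →ₗ[R] H) : ℕ → (H →ₗ[R] H) × (H →ₗ[R] H)
  | 0 => (LinearMap.id, τ)
  | n + 1 => (convProd LinearMap.id (PsiAux τ n).2, convProd τ (PsiAux τ n).1)

/-- The operator `Ψ_a^+` (for `a ≥ 1`). -/
noncomputable def PsiPlus {R H : Type*} [CommRing R] [Ring H] [Bialgebra R H]
    (τ : H →ₗ[R] H) (a : ℕ) : H →ₗ[R] H := (PsiAux τ (a - 1)).1

/-- The operator `Ψ_a^−` (for `a ≥ 1`). -/
noncomputable def PsiMinus {R H : Type*} [CommRing R] [Ring H] [Bialgebra R H]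
    (τ : H →ₗ[R] H) (a : ℕ) : H →ₗ[R] H := (PsiAux τ (a - 1)).2

/-- `p` is a primitive element: `Δ p = 1 ⊗ p + p ⊗ 1`. -/
def IsPrimitive (R : Type*) {H : Type*} [CommRing R] [Ring H] [Bialgebra R H] (p : H) : Prop :=
  Coalgebra.comul (R := R) p = 1 ⊗ₜ[R] p + p ⊗ₜ[R] 1

/-- `τ` is a coalgebra morphism: `Δ ∘ τ = (τ ⊗ τ) ∘ Δ` and `ε ∘ τ = ε`. -/
def IsCoalgMorph {R H : Type*} [CommRing R] [Ring H] [Bialgebra R H] (τ : H →ₗ[R] H) : Prop :=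
  Coalgebra.comul ∘ₗ τ = TensorProduct.map τ τ ∘ₗ (Coalgebra.comul : H →ₗ[R] H ⊗[R] H) ∧
    Coalgebra.counit ∘ₗ τ = (Coalgebra.counit : H →ₗ[R] R)

/-- `τ` is a coalgebra antimorphism: `Δ ∘ τ = swap ∘ (τ ⊗ τ) ∘ Δ` and `ε ∘ τ = ε`. -/
def IsCoalgAntimorph {R H : Type*} [CommRing R] [Ring H] [Bialgebra R H] (τ : H →ₗ[R] H) : Prop :=
  Coalgebra.comul ∘ₗ τ =
      (TensorProduct.comm R H H).toLinearMap ∘ₗ TensorProduct.map τ τ ∘ₗ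
        (Coalgebra.comul : H →ₗ[R] H ⊗[R] H) ∧
    Coalgebra.counit ∘ₗ τ = (Coalgebra.counit : H →ₗ[R] R)

/-!
Since `τ` is an algebra morphism fixing every `p i`, it fixes every word in the `p i`, so on the
symmetrised product `Ψ_a^±` behave like the Adams operation `id^{*a}`. The coproduct of a word
in primitives is the sum, over all subsets `S` of its letters, of the subword on `S` tensored
with the subword on the complement. Hence if `g` multiplies the right halves of all splittings
of the words of `v` by `β ^ length`, then `f * g`, with `f` fixing words, multiplies them by
`Σ_S β ^ #Sᶜ = (1 + β) ^ length`. Starting from `β = 1`, after `a - 1` steps this is `a ^ k`.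
-/

theorem List.exists_ofFn_eq_of_perm_finRange {k : ℕ} {l : List (Fin k)}
    (h : l.Perm (List.finRange k)) :
    ∃ e : Equiv.Perm (Fin k), List.ofFn e = l := by
  have hlen : l.length = k := by simpa using h.length_eq
  have hnd : l.Nodup := h.nodup_iff.2 (List.nodup_finRange k)
  let e := (finCongr hlen.symm).trans
    (hnd.getEquivOfForallMemList l fun x => h.mem_iff.2 (List.mem_finRange x))
  refine ⟨e, List.ext_get (by simp [hlen]) fun i _ _ => ?_⟩
  simp [e, List.Nodup.getEquivOfForallMemList]

theorem List.Perm.sum_map_perm_eq_sum_ofFn {M : Type*} [AddCommMonoid M] {k : ℕ}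
    {l : List (Fin k)} (h : l.Perm (List.finRange k)) (Φ : List (Fin k) → M) :
    ∑ σ : Equiv.Perm (Fin k), Φ (l.map σ) = ∑ σ : Equiv.Perm (Fin k), Φ (List.ofFn σ) := by
  obtain ⟨e, rfl⟩ := List.exists_ofFn_eq_of_perm_finRange h
  simp only [List.map_ofFn]
  exact Fintype.sum_equiv (Equiv.mulRight e) _ _ fun σ => rfl

theorem List.sum_powerset_pow_length_filter_notMem {R ι : Type*} [CommRing R] [DecidableEq ι]
    {l : List ι} (hl : l.Nodup) (β : R) :
    ∑ S ∈ l.toFinset.powerset, β ^ (l.filter (· ∉ S)).length = (1 + β) ^ l.length := by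
  have hlen : ∀ S ∈ l.toFinset.powerset,
      (l.filter (· ∉ S)).length = l.toFinset.card - S.card := fun S hS => by
    rw [← List.toFinset_card_of_nodup (hl.filter _), List.toFinset_filter,
      ← Finset.card_sdiff_of_subset (Finset.mem_powerset.1 hS)]
    congr 1
    ext; simp
  rw [Finset.sum_congr rfl fun S hS => by rw [hlen S hS], ← List.toFinset_card_of_nodup hl,
    ← Finset.sum_pow_mul_eq_add_pow]
  simp

section Bialgebra

open Equiv

variable {R H : Type*} [CommRing R] [Ring H] [Bialgebra R H]

theorem comul_list_prod_map_of_isPrimitive {ι : Type*} [DecidableEq ι] (q : ι → H)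
    {l : List ι} (hl : l.Nodup) (hq : ∀ i ∈ l, IsPrimitive R (q i)) :
    Coalgebra.comul (R := R) (l.map q).prod =
      ∑ S ∈ l.toFinset.powerset,
        ((l.filter (· ∈ S)).map q).prod ⊗ₜ[R] ((l.filter (· ∉ S)).map q).prod := by
  induction l with
  | nil => simp [Algebra.TensorProduct.one_def]
  | cons a l ih =>
    obtain ⟨ha, hl⟩ := List.nodup_cons.1 hl
    have ha' : a ∉ l.toFinset := by simpa using ha
    rw [List.map_cons, List.prod_cons, Bialgebra.comul_mul, hq a (by simp),
      ih hl fun i hi => hq i (by simp [hi]), List.toFinset_cons, Finset.sum_powerset_insert ha',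
      add_mul, Finset.mul_sum, Finset.mul_sum]
    congr 1
    · refine Finset.sum_congr rfl fun S hS => ?_
      have haS : a ∉ S := fun h => ha' (Finset.mem_powerset.1 hS h)
      simp [haS]
    · refine Finset.sum_congr rfl fun S _ => ?_
      have hne : ∀ i ∈ l, i ≠ a := fun i hi h => ha (h ▸ hi)
      have hin : (a :: l).filter (· ∈ insert a S) = a :: l.filter (· ∈ S) := by
        rw [List.filter_cons_of_pos (by simp)]
        exact congrArg _ (List.filter_congr fun i hi => by simp [hne i hi])
      have hout : (a :: l).filter (· ∉ insert a S) = l.filter (· ∉ S) := by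
        rw [List.filter_cons_of_neg (by simp)]
        exact List.filter_congr fun i hi => by simp [hne i hi]
      rw [hin, hout]
      simp

section SplitEigen

variable {k : ℕ}

noncomputable def symmetrizedProd (p : Fin k → H) : H :=
  ∑ σ : Perm (Fin k), (List.ofFn fun i => p (σ i)).prod

/-- The left part `l₁` absorbs the letters that `f` keeps in place in `f * g`, so this property,
unlike the eigenvector equation (the case `l₁ = []`), survives the induction on `a`. -/
def IsSplitEigen (p : Fin k → H) (F : H →ₗ[R] H) (β : R) : Prop :=
  ∀ l₁ l₂ : List (Fin k), (l₁ ++ l₂).Perm (List.finRange k) →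
    ∑ σ : Perm (Fin k), (l₁.map (p ∘ σ)).prod * F (l₂.map (p ∘ σ)).prod =
      β ^ l₂.length • symmetrizedProd p

variable {p : Fin k → H} {F f g : H →ₗ[R] H} {β : R}

theorem IsSplitEigen.apply_symmetrizedProd (h : IsSplitEigen p F β) :
    F (symmetrizedProd p) = β ^ k • symmetrizedProd p := by
  simpa [symmetrizedProd, List.ofFn_eq_map, Function.comp_def] using
    h [] (List.finRange k) List.Perm.rfl

theorem isSplitEigen_one (hF : ∀ l : List (Fin k), F (l.map p).prod = (l.map p).prod) :
    IsSplitEigen p F 1 := by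
  intro l₁ l₂ hperm
  simp only [← List.map_map, hF, ← List.prod_append, ← List.map_append, one_pow, one_smul]
  rw [hperm.sum_map_perm_eq_sum_ofFn fun l => (l.map p).prod, symmetrizedProd]
  simp only [List.map_ofFn]
  rfl

theorem isSplitEigen_convProd (hp : ∀ i, IsPrimitive R (p i))
    (hf : ∀ l : List (Fin k), f (l.map p).prod = (l.map p).prod) (hg : IsSplitEigen p g β) :
    IsSplitEigen p (convProd f g) (1 + β) := by
  intro l₁ l₂ hperm
  have hl₂ : l₂.Nodup := (List.nodup_append.1 (hperm.nodup_iff.2 (List.nodup_finRange k))).2.1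
  have hconv : ∀ σ : Perm (Fin k), convProd f g (l₂.map (p ∘ σ)).prod =
      ∑ S ∈ l₂.toFinset.powerset,
        ((l₂.filter (· ∈ S)).map (p ∘ σ)).prod * g ((l₂.filter (· ∉ S)).map (p ∘ σ)).prod := by
    intro σ
    rw [convProd, LinearMap.comp_apply, LinearMap.comp_apply,
      comul_list_prod_map_of_isPrimitive (p ∘ σ) hl₂ fun i _ => hp (σ i), map_sum, map_sum]
    refine Finset.sum_congr rfl fun S _ => ?_
    simp only [TensorProduct.map_tmul, LinearMap.mul'_apply, ← List.map_map, hf]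
  have hsplit : ∀ S ∈ l₂.toFinset.powerset,
      ∑ σ : Perm (Fin k), (l₁.map (p ∘ σ)).prod *
        (((l₂.filter (· ∈ S)).map (p ∘ σ)).prod * g ((l₂.filter (· ∉ S)).map (p ∘ σ)).prod) =
      β ^ (l₂.filter (· ∉ S)).length • symmetrizedProd p := fun S _ => by
    simp only [← mul_assoc, ← List.prod_append, ← List.map_append]
    refine hg _ _ (List.Perm.trans ?_ hperm)
    rw [List.append_assoc]
    simpa using (List.filter_append_perm (· ∈ S) l₂).append_left l₁
  simp only [hconv, Finset.mul_sum]
  rw [Finset.sum_comm, Finset.sum_congr rfl hsplit, ← Finset.sum_smul,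
    List.sum_powerset_pow_length_filter_notMem hl₂]

end SplitEigen

theorem isSplitEigen_psiAux {k : ℕ} {p : Fin k → H} {τ : H →ₗ[R] H}
    (hp : ∀ i, IsPrimitive R (p i))
    (hτ : ∀ l : List (Fin k), τ (l.map p).prod = (l.map p).prod) (n : ℕ) :
    IsSplitEigen p (PsiAux τ n).1 (n + 1 : ℕ) ∧ IsSplitEigen p (PsiAux τ n).2 (n + 1 : ℕ) := by
  induction n with
  | zero =>
    rw [Nat.cast_one]
    exact ⟨isSplitEigen_one fun _ => rfl, isSplitEigen_one hτ⟩
  | succ n ih =>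
    rw [show ((n + 1 + 1 : ℕ) : R) = 1 + (n + 1 : ℕ) by push_cast; ring]
    exact ⟨isSplitEigen_convProd hp (fun _ => rfl) ih.2, isSplitEigen_convProd hp hτ ih.1⟩

end Bialgebra

theorem symmetrised_product_eigenvector_of_algebra_morphism_general
    {R H : Type*} [CommRing R] [Ring H] [Bialgebra R H]
    (τ : H →ₗ[R] H)
    (halg1 : τ 1 = 1) (halgmul : ∀ x y : H, τ (x * y) = τ x * τ y)
    (k : ℕ) (p : Fin k → H)
    (hprim : ∀ i, IsPrimitive R (p i))
    (hfix : ∀ i, τ (p i) = p i)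
    (a : ℕ) (ha : 1 ≤ a) :
    PsiPlus τ a (∑ σ : Equiv.Perm (Fin k), (List.ofFn fun i => p (σ i)).prod) =
        ((a : R)) ^ k • (∑ σ : Equiv.Perm (Fin k), (List.ofFn fun i => p (σ i)).prod) ∧
    PsiMinus τ a (∑ σ : Equiv.Perm (Fin k), (List.ofFn fun i => p (σ i)).prod) =
        ((a : R)) ^ k • (∑ σ : Equiv.Perm (Fin k), (List.ofFn fun i => p (σ i)).prod) := by
  obtain ⟨n, rfl⟩ : ∃ n, a = n + 1 := ⟨a - 1, by omega⟩
  have hτ : ∀ l : List (Fin k), τ (l.map p).prod = (l.map p).prod := fun l => by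
    rw [← AlgHom.ofLinearMap_apply τ halg1 halgmul, map_list_prod, List.map_map]
    exact congrArg List.prod (List.map_congr_left fun i _ => hfix i)
  obtain ⟨hplus, hminus⟩ := isSplitEigen_psiAux hprim hτ n
  exact ⟨hplus.apply_symmetrizedProd, hminus.apply_symmetrizedProd⟩

/-- if `τ` is a linear involution on a bialgebra `H` that is an algebra morphism
and a coalgebra (anti)morphism, and `p_1, …, p_k` are `τ`-invariant primitives, then the
symmetrised product `v = Σ_{σ ∈ S_k} p_{σ(1)}⋯p_{σ(k)}` satisfies
`Ψ_a^+(v) = (a·1_R)^k • v` and `Ψ_a^−(v) = (a·1_R)^k • v` for every `a ≥ 1`. -/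
theorem symmetrised_product_eigenvector_of_algebra_morphism
    {R H : Type*} [CommRing R] [Ring H] [Bialgebra R H]
    (τ : H →ₗ[R] H)
    (hinv : ∀ x, τ (τ x) = x)
    (halg1 : τ 1 = 1) (halgmul : ∀ x y : H, τ (x * y) = τ x * τ y)
    (hco : IsCoalgMorph τ ∨ IsCoalgAntimorph τ)
    (k : ℕ) (p : Fin k → H)
    (hprim : ∀ i, IsPrimitive R (p i))
    (hfix : ∀ i, τ (p i) = p i)
    (a : ℕ) (ha : 1 ≤ a) :
    PsiPlus τ a (∑ σ : Equiv.Perm (Fin k), (List.ofFn fun i => p (σ i)).prod) =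
        ((a : R)) ^ k • (∑ σ : Equiv.Perm (Fin k), (List.ofFn fun i => p (σ i)).prod) ∧
    PsiMinus τ a (∑ σ : Equiv.Perm (Fin k), (List.ofFn fun i => p (σ i)).prod) =
        ((a : R)) ^ k • (∑ σ : Equiv.Perm (Fin k), (List.ofFn fun i => p (σ i)).prod) :=
  symmetrised_product_eigenvector_of_algebra_morphism_general τ halg1 halgmul k p hprim hfix a ha
end

section
/- Let H be a bialgebra over a commutative ring R and let τ : H → H be an R-linear involution that is an algebra antimorphism and is either a coalgebra morphism or a coalgebra antimorphism. Let p̄ ∈ H be primitive with τ(p̄) = −p̄, and let s = p_1⋯p_m be any product of primitive elements of H (m ≥ 0; s = 1 when m = 0). Then for every odd integer a ≥ 1: Ψ_a^+(p̄ s) = p̄ · Ψ_a^+(s), Ψ_a^+(s p̄) = Ψ_a^+(s) · p̄, Ψ_a^−(p̄ s) = −Ψ_a^−(s) · p̄, and Ψ_a^−(s p̄) = −p̄ · Ψ_a^−(s). -/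
open TensorProduct

/-!
For primitive `p`, `Δ (p s) = (1 ⊗ p + p ⊗ 1) Δ s`, hence `(f * g)(p s) = (f * (g ∘ p·))(s) +
((f ∘ p·) * g)(s)`, and likewise for `s p`. Let `L`, `R` be left and right multiplication by `p̄`;
the hypotheses on `τ` give `τ L = -R τ` and `τ R = -L τ`. The identities
`Ψ^+ L = L Ψ^+`, `Ψ^+ R = R Ψ^+`, `Ψ^- L = -R Ψ^-`, `Ψ^- R = -L Ψ^-`, true for `a = 1`, pass
through the recursion to `Ψ^+ L = (L - R) Ψ^+`, `Ψ^+ R = 0`, `Ψ^- L = 0`, `Ψ^- R = (R - L) Ψ^-`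
at `a + 1` and back to themselves at `a + 2`; the vanishing terms cancel because
`(f ∘ ·p) * g = f * (p· ∘ g)`.
-/
section Convolution

open LinearMap WithConv

variable {R H : Type*} [CommRing R] [Ring H] [Bialgebra R H]

lemma convProd_eq_ofConv_mul (f g : H →ₗ[R] H) :
    convProd f g = (toConv f * toConv g).ofConv := rfl

lemma convProd_neg_left (f g : H →ₗ[R] H) : convProd (-f) g = -convProd f g := by
  rw [convProd_eq_ofConv_mul, toConv_neg, neg_mul, ofConv_neg, convProd_eq_ofConv_mul]

lemma convProd_neg_right (f g : H →ₗ[R] H) : convProd f (-g) = -convProd f g := by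
  rw [convProd_eq_ofConv_mul, toConv_neg, mul_neg, ofConv_neg, convProd_eq_ofConv_mul]

lemma convProd_sub_right (f g₁ g₂ : H →ₗ[R] H) :
    convProd f (g₁ - g₂) = convProd f g₁ - convProd f g₂ := by
  rw [convProd_eq_ofConv_mul, toConv_sub, mul_sub, ofConv_sub]
  rfl

lemma convProd_zero_right (f : H →ₗ[R] H) : convProd f 0 = 0 := by
  rw [convProd_eq_ofConv_mul, toConv_zero, mul_zero, ofConv_zero]

lemma convProd_mulLeft_comp (x : H) (f g : H →ₗ[R] H) :
    convProd (mulLeft R x ∘ₗ f) g = mulLeft R x ∘ₗ convProd f g := by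
  have h : mul' R H ∘ₗ map (mulLeft R x ∘ₗ f) g = mulLeft R x ∘ₗ mul' R H ∘ₗ map f g :=
    TensorProduct.ext' fun a b => by simp [mul_assoc]
  ext s
  exact LinearMap.congr_fun h (Coalgebra.comul s)

lemma convProd_mulRight_comp_right (x : H) (f g : H →ₗ[R] H) :
    convProd f (mulRight R x ∘ₗ g) = mulRight R x ∘ₗ convProd f g := by
  have h : mul' R H ∘ₗ map f (mulRight R x ∘ₗ g) = mulRight R x ∘ₗ mul' R H ∘ₗ map f g :=
    TensorProduct.ext' fun a b => by simp [mul_assoc]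
  ext s
  exact LinearMap.congr_fun h (Coalgebra.comul s)

lemma convProd_mulRight_comp (x : H) (f g : H →ₗ[R] H) :
    convProd (mulRight R x ∘ₗ f) g = convProd f (mulLeft R x ∘ₗ g) := by
  have h : mul' R H ∘ₗ map (mulRight R x ∘ₗ f) g = mul' R H ∘ₗ map f (mulLeft R x ∘ₗ g) :=
    TensorProduct.ext' fun a b => by simp [mul_assoc]
  ext s
  exact LinearMap.congr_fun h (Coalgebra.comul s)

lemma convProd_comp_mulLeft_of_isPrimitive {p : H} (hp : IsPrimitive R p) (f g : H →ₗ[R] H) :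
    convProd f g ∘ₗ mulLeft R p =
      convProd f (g ∘ₗ mulLeft R p) + convProd (f ∘ₗ mulLeft R p) g := by
  have h : mul' R H ∘ₗ map f g ∘ₗ mulLeft R (1 ⊗ₜ[R] p + p ⊗ₜ[R] 1) =
      mul' R H ∘ₗ map f (g ∘ₗ mulLeft R p) + mul' R H ∘ₗ map (f ∘ₗ mulLeft R p) g :=
    TensorProduct.ext' fun a b => by simp [add_mul]
  ext s
  have hΔ : Coalgebra.comul (p * s) = (1 ⊗ₜ[R] p + p ⊗ₜ[R] 1) * Coalgebra.comul s := by
    rw [Bialgebra.comul_mul, hp]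
  simp only [convProd, comp_apply, LinearMap.add_apply, mulLeft_apply, hΔ]
  exact LinearMap.congr_fun h (Coalgebra.comul s)

lemma convProd_comp_mulRight_of_isPrimitive {p : H} (hp : IsPrimitive R p) (f g : H →ₗ[R] H) :
    convProd f g ∘ₗ mulRight R p =
      convProd f (g ∘ₗ mulRight R p) + convProd (f ∘ₗ mulRight R p) g := by
  have h : mul' R H ∘ₗ map f g ∘ₗ mulRight R (1 ⊗ₜ[R] p + p ⊗ₜ[R] 1) =
      mul' R H ∘ₗ map f (g ∘ₗ mulRight R p) + mul' R H ∘ₗ map (f ∘ₗ mulRight R p) g :=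
    TensorProduct.ext' fun a b => by simp [mul_add]
  ext s
  have hΔ : Coalgebra.comul (s * p) = Coalgebra.comul s * (1 ⊗ₜ[R] p + p ⊗ₜ[R] 1) := by
    rw [Bialgebra.comul_mul, hp]
  simp only [convProd, comp_apply, LinearMap.add_apply, mulRight_apply, hΔ]
  exact LinearMap.congr_fun h (Coalgebra.comul s)

end Convolution

section ShuffleRelations

open LinearMap

variable {R H : Type*} [CommRing R] [Ring H] [Bialgebra R H]

structure OddShuffleRelations (p : H) (Ψp Ψm : H →ₗ[R] H) : Prop where
  plus_comp_mulLeft : Ψp ∘ₗ mulLeft R p = mulLeft R p ∘ₗ Ψp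
  plus_comp_mulRight : Ψp ∘ₗ mulRight R p = mulRight R p ∘ₗ Ψp
  minus_comp_mulLeft : Ψm ∘ₗ mulLeft R p = -(mulRight R p ∘ₗ Ψm)
  minus_comp_mulRight : Ψm ∘ₗ mulRight R p = -(mulLeft R p ∘ₗ Ψm)

structure EvenShuffleRelations (p : H) (Ψp Ψm : H →ₗ[R] H) : Prop where
  plus_comp_mulLeft : Ψp ∘ₗ mulLeft R p = mulLeft R p ∘ₗ Ψp - mulRight R p ∘ₗ Ψp
  plus_comp_mulRight : Ψp ∘ₗ mulRight R p = 0
  minus_comp_mulLeft : Ψm ∘ₗ mulLeft R p = 0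
  minus_comp_mulRight : Ψm ∘ₗ mulRight R p = mulRight R p ∘ₗ Ψm - mulLeft R p ∘ₗ Ψm

lemma oddShuffleRelations_id_of_antimorphism {τ : H →ₗ[R] H}
    (hτ : ∀ x y : H, τ (x * y) = τ y * τ x) {p : H} (hp : τ p = -p) :
    OddShuffleRelations p LinearMap.id τ where
  plus_comp_mulLeft := rfl
  plus_comp_mulRight := rfl
  minus_comp_mulLeft := by ext x; simp [hτ, hp]
  minus_comp_mulRight := by ext x; simp [hτ, hp]

variable {p : H} {τ Ψp Ψm : H →ₗ[R] H}

lemma OddShuffleRelations.convProd (h : OddShuffleRelations p Ψp Ψm) (hp : IsPrimitive R p)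
    (hτ : OddShuffleRelations p LinearMap.id τ) :
    EvenShuffleRelations p (convProd LinearMap.id Ψm) (convProd τ Ψp) where
  plus_comp_mulLeft := by
    rw [convProd_comp_mulLeft_of_isPrimitive hp, h.minus_comp_mulLeft, hτ.plus_comp_mulLeft,
      convProd_neg_right, convProd_mulRight_comp_right, convProd_mulLeft_comp]
    abel
  plus_comp_mulRight := by
    rw [convProd_comp_mulRight_of_isPrimitive hp, h.minus_comp_mulRight, hτ.plus_comp_mulRight,
      convProd_neg_right, convProd_mulRight_comp]
    abel
  minus_comp_mulLeft := by
    rw [convProd_comp_mulLeft_of_isPrimitive hp, h.plus_comp_mulLeft, hτ.minus_comp_mulLeft,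
      convProd_neg_left, convProd_mulRight_comp]
    abel
  minus_comp_mulRight := by
    rw [convProd_comp_mulRight_of_isPrimitive hp, h.plus_comp_mulRight, hτ.minus_comp_mulRight,
      convProd_neg_left, convProd_mulRight_comp_right, convProd_mulLeft_comp]
    abel

lemma EvenShuffleRelations.convProd (h : EvenShuffleRelations p Ψp Ψm) (hp : IsPrimitive R p)
    (hτ : OddShuffleRelations p LinearMap.id τ) :
    OddShuffleRelations p (convProd LinearMap.id Ψm) (convProd τ Ψp) where
  plus_comp_mulLeft := by
    rw [convProd_comp_mulLeft_of_isPrimitive hp, h.minus_comp_mulLeft, hτ.plus_comp_mulLeft,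
      convProd_zero_right, convProd_mulLeft_comp, zero_add]
  plus_comp_mulRight := by
    rw [convProd_comp_mulRight_of_isPrimitive hp, h.minus_comp_mulRight, hτ.plus_comp_mulRight,
      convProd_sub_right, convProd_mulRight_comp_right, convProd_mulRight_comp]
    abel
  minus_comp_mulLeft := by
    rw [convProd_comp_mulLeft_of_isPrimitive hp, h.plus_comp_mulLeft, hτ.minus_comp_mulLeft,
      convProd_neg_left, convProd_sub_right, convProd_mulRight_comp_right, convProd_mulRight_comp]
    abel
  minus_comp_mulRight := by
    rw [convProd_comp_mulRight_of_isPrimitive hp, h.plus_comp_mulRight, hτ.minus_comp_mulRight,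
      convProd_zero_right, convProd_neg_left, convProd_mulLeft_comp, zero_add]

lemma oddShuffleRelations_psiAux_two_mul (hp : IsPrimitive R p)
    (hτ : OddShuffleRelations p LinearMap.id τ) (k : ℕ) :
    OddShuffleRelations p (PsiAux τ (2 * k)).1 (PsiAux τ (2 * k)).2 := by
  induction k with
  | zero => exact hτ
  | succ k ih => exact (ih.convProd hp hτ).convProd hp hτ

end ShuffleRelations

theorem negating_primitive_commutation_antimorphism_odd_general
    {R H : Type*} [CommRing R] [Ring H] [Bialgebra R H]
    (τ : H →ₗ[R] H)
    (halgmul : ∀ x y : H, τ (x * y) = τ y * τ x)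
    (pbar : H) (hpbar : IsPrimitive R pbar) (hneg : τ pbar = -pbar)
    (m : ℕ) (q : Fin m → H)
    (a : ℕ) (haodd : Odd a) :
    PsiPlus τ a (pbar * (List.ofFn q).prod) = pbar * PsiPlus τ a ((List.ofFn q).prod) ∧
    PsiPlus τ a ((List.ofFn q).prod * pbar) = PsiPlus τ a ((List.ofFn q).prod) * pbar ∧
    PsiMinus τ a (pbar * (List.ofFn q).prod) = -(PsiMinus τ a ((List.ofFn q).prod) * pbar) ∧
    PsiMinus τ a ((List.ofFn q).prod * pbar) = -(pbar * PsiMinus τ a ((List.ofFn q).prod)) := by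
  obtain ⟨k, rfl⟩ := haodd
  have h := oddShuffleRelations_psiAux_two_mul hpbar
    (oddShuffleRelations_id_of_antimorphism halgmul hneg) k
  simp only [PsiPlus, PsiMinus, Nat.add_sub_cancel]
  exact ⟨LinearMap.congr_fun h.plus_comp_mulLeft _, LinearMap.congr_fun h.plus_comp_mulRight _,
    LinearMap.congr_fun h.minus_comp_mulLeft _, LinearMap.congr_fun h.minus_comp_mulRight _⟩

/-- if `τ` is a linear involution on a bialgebra `H` that is an algebra
antimorphism and a coalgebra (anti)morphism, `p̄` is a primitive with `τ(p̄) = −p̄`, and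
`s = p_1⋯p_m` is any product of primitives, then for every odd `a ≥ 1`:
`Ψ_a^+(p̄s) = p̄·Ψ_a^+(s)`, `Ψ_a^+(sp̄) = Ψ_a^+(s)·p̄`,
`Ψ_a^−(p̄s) = −Ψ_a^−(s)·p̄`, `Ψ_a^−(sp̄) = −p̄·Ψ_a^−(s)`. -/
theorem negating_primitive_commutation_antimorphism_odd
    {R H : Type*} [CommRing R] [Ring H] [Bialgebra R H]
    (τ : H →ₗ[R] H)
    (hinv : ∀ x, τ (τ x) = x)
    (halg1 : τ 1 = 1) (halgmul : ∀ x y : H, τ (x * y) = τ y * τ x)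
    (hco : IsCoalgMorph τ ∨ IsCoalgAntimorph τ)
    (pbar : H) (hpbar : IsPrimitive R pbar) (hneg : τ pbar = -pbar)
    (m : ℕ) (q : Fin m → H) (hq : ∀ i, IsPrimitive R (q i))
    (a : ℕ) (ha : 1 ≤ a) (haodd : Odd a) :
    PsiPlus τ a (pbar * (List.ofFn q).prod) = pbar * PsiPlus τ a ((List.ofFn q).prod) ∧
    PsiPlus τ a ((List.ofFn q).prod * pbar) = PsiPlus τ a ((List.ofFn q).prod) * pbar ∧
    PsiMinus τ a (pbar * (List.ofFn q).prod) = -(PsiMinus τ a ((List.ofFn q).prod) * pbar) ∧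
    PsiMinus τ a ((List.ofFn q).prod * pbar) = -(pbar * PsiMinus τ a ((List.ofFn q).prod)) :=
  negating_primitive_commutation_antimorphism_odd_general τ halgmul pbar hpbar hneg m q a haodd
end

section
/- Let H be a bialgebra over a commutative ring R and let τ : H → H be an R-linear involution that is an algebra morphism and is either a coalgebra morphism or a coalgebra antimorphism. Let p̄ ∈ H be primitive with τ(p̄) = −p̄, and let s = p_1⋯p_m be any product of primitive elements of H (m ≥ 0; s = 1 when m = 0). Then for every odd integer a ≥ 1: Ψ_a^+(p̄ s + s p̄) = p̄ · Ψ_a^+(s) + Ψ_a^+(s) · p̄ and Ψ_a^−(p̄ s + s p̄) = −p̄ · Ψ_a^−(s) − Ψ_a^−(s) · p̄. -/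
open TensorProduct

/-!
Since `Δ p̄ = 1 ⊗ p̄ + p̄ ⊗ 1`, for multiplicative `f` the convolution `f * g` sends `p̄x + xp̄` to
`f(p̄)·(f * g)(x) + (f * g)(x)·r` as soon as `g` sends `p̄v + vp̄` to `g(v)·r - f(p̄)·g(v)`: the cross
terms `f(x₁) f(p̄) g(x₂)` cancel. Applying this twice, with `f = τ, id` for `Ψ^+` and `f = id, τ`
for `Ψ^-`, shows that `Ψ_{a+2}^±` sends `p̄x + xp̄` to `c·Ψ_{a+2}^±(x) + Ψ_{a+2}^±(x)·c`, where
`c = ±p̄`, whenever `Ψ_a^±` does; `Ψ_1^+ = id` and `Ψ_1^- = τ` start the induction.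
-/

section

variable {R H : Type*} [CommRing R] [Ring H] [Bialgebra R H]

theorem convProd_apply_mul_add_mul_of_isPrimitive {f g : H →ₗ[R] H}
    (hf : ∀ x y, f (x * y) = f x * f y) {p r : H} (hp : IsPrimitive R p)
    (hg : ∀ v, g (p * v + v * p) = g v * r - f p * g v) (x : H) :
    convProd f g (p * x + x * p) = f p * convProd f g x + convProd f g x * r := by
  have hΔp : Coalgebra.comul (R := R) p = 1 ⊗ₜ[R] p + p ⊗ₜ[R] 1 := hp
  set φ : H ⊗[R] H →ₗ[R] H := LinearMap.mul' R H ∘ₗ TensorProduct.map f g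
  suffices ∀ t, φ (Coalgebra.comul p * t + t * Coalgebra.comul p) = f p * φ t + φ t * r by
    change φ (Coalgebra.comul (p * x + x * p)) =
      f p * φ (Coalgebra.comul x) + φ (Coalgebra.comul x) * r
    rw [map_add, Bialgebra.comul_mul, Bialgebra.comul_mul]
    exact this _
  intro t
  induction t using TensorProduct.induction_on with
  | zero => simp
  | add t t' ht ht' =>
    rw [mul_add, add_mul, add_add_add_comm, map_add, ht, ht', map_add]
    noncomm_ring
  | tmul u v =>
    have hv := hg v
    rw [map_add] at hv
    simp only [φ, hΔp, add_mul, mul_add, Algebra.TensorProduct.tmul_mul_tmul, one_mul, mul_one,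
      map_add, LinearMap.comp_apply, TensorProduct.map_tmul, LinearMap.mul'_apply, hf,
      eq_sub_of_add_eq hv]
    noncomm_ring

theorem convProd_convProd_apply_mul_add_mul_of_isPrimitive {f f' g : H →ₗ[R] H}
    (hf : ∀ x y, f (x * y) = f x * f y) (hf' : ∀ x y, f' (x * y) = f' x * f' y)
    {p c : H} (hp : IsPrimitive R p) (hfp : f p = c) (hf'p : f' p = -c)
    (hg : ∀ v, g (p * v + v * p) = c * g v + g v * c) (x : H) :
    convProd f (convProd f' g) (p * x + x * p) =
      c * convProd f (convProd f' g) x + convProd f (convProd f' g) x * c := by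
  rw [← hfp]
  refine convProd_apply_mul_add_mul_of_isPrimitive hf hp (fun v => ?_) x
  rw [convProd_apply_mul_add_mul_of_isPrimitive hf' hp (fun w => by rw [hg, hf'p]; noncomm_ring),
    hf'p, hfp]
  noncomm_ring

theorem psiPlus_add_two (τ : H →ₗ[R] H) {a : ℕ} (ha : 1 ≤ a) :
    PsiPlus τ (a + 2) = convProd LinearMap.id (convProd τ (PsiPlus τ a)) := by
  obtain ⟨b, rfl⟩ := Nat.exists_eq_add_of_le' ha
  rfl

theorem psiMinus_add_two (τ : H →ₗ[R] H) {a : ℕ} (ha : 1 ≤ a) :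
    PsiMinus τ (a + 2) = convProd τ (convProd LinearMap.id (PsiMinus τ a)) := by
  obtain ⟨b, rfl⟩ := Nat.exists_eq_add_of_le' ha
  rfl

theorem psiPlus_psiMinus_apply_mul_add_mul_of_odd {τ : H →ₗ[R] H}
    (hτ : ∀ x y, τ (x * y) = τ x * τ y) {p : H} (hp : IsPrimitive R p) (hτp : τ p = -p)
    {a : ℕ} (ha : Odd a) :
    (∀ s, PsiPlus τ a (p * s + s * p) = p * PsiPlus τ a s + PsiPlus τ a s * p) ∧
      ∀ s, PsiMinus τ a (p * s + s * p) = -p * PsiMinus τ a s + PsiMinus τ a s * -p := by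
  obtain ⟨n, rfl⟩ := ha
  induction n with
  | zero =>
    refine ⟨fun s => rfl, fun s => ?_⟩
    change τ _ = -p * τ s + τ s * -p
    rw [map_add, hτ, hτ, hτp]
  | succ n ih =>
    have hid : ∀ x y : H, LinearMap.id (R := R) (x * y) = x * y := fun _ _ => rfl
    rw [show 2 * (n + 1) + 1 = 2 * n + 1 + 2 by ring, psiPlus_add_two τ (by omega),
      psiMinus_add_two τ (by omega)]
    exact ⟨convProd_convProd_apply_mul_add_mul_of_isPrimitive hid hτ hp rfl hτp ih.1,
      convProd_convProd_apply_mul_add_mul_of_isPrimitive hτ hid hp hτp (neg_neg p).symm ih.2⟩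

end

theorem negating_primitive_commutation_morphism_odd_general
    {R H : Type*} [CommRing R] [Ring H] [Bialgebra R H]
    (τ : H →ₗ[R] H)
    (halgmul : ∀ x y : H, τ (x * y) = τ x * τ y)
    (pbar : H) (hpbar : IsPrimitive R pbar) (hneg : τ pbar = -pbar)
    (m : ℕ) (q : Fin m → H)
    (a : ℕ) (haodd : Odd a) :
    PsiPlus τ a (pbar * (List.ofFn q).prod + (List.ofFn q).prod * pbar) =
        pbar * PsiPlus τ a ((List.ofFn q).prod) + PsiPlus τ a ((List.ofFn q).prod) * pbar ∧
    PsiMinus τ a (pbar * (List.ofFn q).prod + (List.ofFn q).prod * pbar) =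
        -(pbar * PsiMinus τ a ((List.ofFn q).prod)) -
          PsiMinus τ a ((List.ofFn q).prod) * pbar := by
  obtain ⟨hplus, hminus⟩ := psiPlus_psiMinus_apply_mul_add_mul_of_odd halgmul hpbar hneg haodd
  refine ⟨hplus _, ?_⟩
  rw [hminus]
  noncomm_ring

/-- if `τ` is a linear involution on a bialgebra `H` that is an algebra
morphism and a coalgebra (anti)morphism, `p̄` is a primitive with `τ(p̄) = −p̄`, and
`s = p_1⋯p_m` is any product of primitives, then for every odd `a ≥ 1`:
`Ψ_a^+(p̄s + sp̄) = p̄·Ψ_a^+(s) + Ψ_a^+(s)·p̄` and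
`Ψ_a^−(p̄s + sp̄) = −p̄·Ψ_a^−(s) − Ψ_a^−(s)·p̄`. -/
theorem negating_primitive_commutation_morphism_odd
    {R H : Type*} [CommRing R] [Ring H] [Bialgebra R H]
    (τ : H →ₗ[R] H)
    (hinv : ∀ x, τ (τ x) = x)
    (halg1 : τ 1 = 1) (halgmul : ∀ x y : H, τ (x * y) = τ x * τ y)
    (hco : IsCoalgMorph τ ∨ IsCoalgAntimorph τ)
    (pbar : H) (hpbar : IsPrimitive R pbar) (hneg : τ pbar = -pbar)
    (m : ℕ) (q : Fin m → H) (hq : ∀ i, IsPrimitive R (q i))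
    (a : ℕ) (ha : 1 ≤ a) (haodd : Odd a) :
    PsiPlus τ a (pbar * (List.ofFn q).prod + (List.ofFn q).prod * pbar) =
        pbar * PsiPlus τ a ((List.ofFn q).prod) + PsiPlus τ a ((List.ofFn q).prod) * pbar ∧
    PsiMinus τ a (pbar * (List.ofFn q).prod + (List.ofFn q).prod * pbar) =
        -(pbar * PsiMinus τ a ((List.ofFn q).prod)) -
          PsiMinus τ a ((List.ofFn q).prod) * pbar :=
  negating_primitive_commutation_morphism_odd_general τ halgmul pbar hpbar hneg m q a haodd
end

section
/- Let H be a bialgebra over a commutative ring R and let τ : H → H be an R-linear involution that is both an algebra morphism and a coalgebra morphism. Let a, b ≥ 1 be integers and assume that either H is commutative (xy = yx for all x, y ∈ H) and a is odd, or H is cocommutative (swap ∘ Δ = Δ) and b is odd. Then Ψ_a^+ ∘ Ψ_b^+ = Ψ_a^− ∘ Ψ_b^− = Ψ_{ab}^+ and Ψ_a^+ ∘ Ψ_b^− = Ψ_a^− ∘ Ψ_b^+ = Ψ_{ab}^−. -/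
open TensorProduct

/-!
Write `Ψ_a^±` as an alternating convolution product of `a` factors `id, τ, id, …` (or
`τ, id, τ, …`). When `H` is commutative, a convolution product of algebra morphisms is again one,
so every `Ψ` is an algebra morphism and `Ψ_a ∘ -` distributes over the `b` factors of `Ψ_b`;
since `Ψ_a ∘ τ = Ψ_a^∓` and `a` is odd, the resulting `b` blocks of length `a` glue together into
one alternating product of length `ab`. When `H` is cocommutative the argument is dual: every `Ψ`
is a coalgebra morphism, and `- ∘ Ψ_b` distributes over the `a` factors of `Ψ_a`.
-/

open Coalgebra LinearMap WithConv

section Convolution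

variable {R H : Type*} [CommRing R] [Ring H] [Bialgebra R H]

lemma convProd_assoc (f g h : H →ₗ[R] H) :
    convProd (convProd f g) h = convProd f (convProd g h) :=
  congrArg ofConv (mul_assoc (toConv f) (toConv g) (toConv h))

lemma comp_convProd {f : H →ₗ[R] H} (hf : f ∘ₗ mul' R H = mul' R H ∘ₗ map f f)
    (p q : H →ₗ[R] H) : f ∘ₗ convProd p q = convProd (f ∘ₗ p) (f ∘ₗ q) := by
  simp only [convProd, ← comp_assoc, hf, map_comp]

lemma convProd_comp {g : H →ₗ[R] H} (hg : comul ∘ₗ g = map g g ∘ₗ comul)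
    (p q : H →ₗ[R] H) : convProd p q ∘ₗ g = convProd (p ∘ₗ g) (q ∘ₗ g) := by
  simp only [convProd, comp_assoc, hg, map_comp]

/- `Δ` is an algebra morphism, and a coalgebra morphism because `H` is cocommutative. -/
lemma comul_comp_convProd [IsCocomm R H] {f g : H →ₗ[R] H}
    (hf : comul ∘ₗ f = map f f ∘ₗ comul) (hg : comul ∘ₗ g = map g g ∘ₗ comul) :
    comul ∘ₗ convProd f g = map (convProd f g) (convProd f g) ∘ₗ comul :=
  calc comul ∘ₗ convProd f g
      = ofConv (toConv (comul ∘ₗ f) * toConv (comul ∘ₗ g)) :=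
        algHom_comp_convMul_distrib (Bialgebra.comulAlgHom R H) (toConv f) (toConv g)
    _ = ofConv (toConv (map f f ∘ₗ comul) * toConv (map g g ∘ₗ comul)) := by rw [hf, hg]
    _ = ofConv (toConv (map f f) * toConv (map g g)) ∘ₗ comul :=
        (convMul_comp_coalgHom_distrib _ _ (comulCoalgHom R H)).symm
    _ = map (convProd f g) (convProd f g) ∘ₗ comul := by rw [map_convMul_map]; rfl

end Convolution

section Psi

variable {R H : Type*} [CommRing R] [Ring H] [Bialgebra R H] (τ : H →ₗ[R] H)

/-- `Psi τ n false = Ψ_{n+1}^+` and `Psi τ n true = Ψ_{n+1}^−`. -/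
noncomputable def Psi (n : ℕ) : Bool → H →ₗ[R] H
  | false => (PsiAux τ n).1
  | true => (PsiAux τ n).2

lemma Psi_succ (n : ℕ) (s : Bool) :
    Psi τ (n + 1) s = convProd (Psi τ 0 s) (Psi τ n (!s)) := by
  cases s <;> rfl

lemma Psi_zero_false : Psi τ 0 false = LinearMap.id := rfl

variable {τ}

lemma Psi_comp_tau (hτ : τ ∘ₗ τ = LinearMap.id) (hτc : comul ∘ₗ τ = map τ τ ∘ₗ comul) :
    ∀ n s, Psi τ n s ∘ₗ τ = Psi τ n (!s)
  | 0, false => id_comp τ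
  | 0, true => hτ
  | n + 1, s => by
    rw [Psi_succ, Psi_succ, convProd_comp hτc, Psi_comp_tau hτ hτc 0, Psi_comp_tau hτ hτc n,
      Bool.not_not]

lemma tau_comp_Psi (hτ : τ ∘ₗ τ = LinearMap.id) (hτm : τ ∘ₗ mul' R H = mul' R H ∘ₗ map τ τ) :
    ∀ n s, τ ∘ₗ Psi τ n s = Psi τ n (!s)
  | 0, false => comp_id τ
  | 0, true => hτ
  | n + 1, s => by
    rw [Psi_succ, Psi_succ, comp_convProd hτm, tau_comp_Psi hτ hτm 0, tau_comp_Psi hτ hτm n,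
      Bool.not_not]

lemma Psi_comp_Psi_zero (hτ : τ ∘ₗ τ = LinearMap.id) (hτc : comul ∘ₗ τ = map τ τ ∘ₗ comul)
    (n : ℕ) (s : Bool) : ∀ t, Psi τ n s ∘ₗ Psi τ 0 t = Psi τ n (s ^^ t)
  | false => by rw [Bool.xor_false]; exact comp_id _
  | true => by rw [Bool.xor_true]; exact Psi_comp_tau hτ hτc n s

lemma Psi_zero_comp_Psi (hτ : τ ∘ₗ τ = LinearMap.id)
    (hτm : τ ∘ₗ mul' R H = mul' R H ∘ₗ map τ τ) (n : ℕ) (t : Bool) :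
    ∀ s, Psi τ 0 s ∘ₗ Psi τ n t = Psi τ n (s ^^ t)
  | false => by rw [Bool.false_xor]; exact id_comp _
  | true => by rw [Bool.true_xor]; exact tau_comp_Psi hτ hτm n t

/- `Psi τ n s` has `n + 1` alternating factors, so for even `n` its last factor has sign `s`. -/
lemma convProd_Psi_of_even : ∀ {n : ℕ}, Even n → ∀ s m,
    convProd (Psi τ n s) (Psi τ m (!s)) = Psi τ (n + m + 1) s
  | 0, _, s, m => by rw [Nat.zero_add, Psi_succ]
  | 1, hn, _, _ => absurd hn Nat.not_even_one
  | n + 2, hn, s, m => by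
    rw [Psi_succ, Psi_succ, Bool.not_not, convProd_assoc, convProd_assoc,
      convProd_Psi_of_even ((Nat.even_add.mp hn).mpr even_two),
      show n + 2 + m + 1 = n + m + 1 + 1 + 1 by omega, Psi_succ τ (n + m + 1 + 1),
      Psi_succ τ (n + m + 1), Bool.not_not]

lemma comul_comp_Psi [IsCocomm R H] (hτc : comul ∘ₗ τ = map τ τ ∘ₗ comul) :
    ∀ n s, comul ∘ₗ Psi τ n s = map (Psi τ n s) (Psi τ n s) ∘ₗ comul
  | 0, false => by rw [Psi_zero_false, comp_id, map_id, id_comp]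
  | 0, true => hτc
  | n + 1, s => by
    rw [Psi_succ]; exact comul_comp_convProd (comul_comp_Psi hτc 0 s) (comul_comp_Psi hτc n !s)

lemma Psi_comp_Psi_of_cocomm [IsCocomm R H] (hτ : τ ∘ₗ τ = LinearMap.id)
    (hτm : τ ∘ₗ mul' R H = mul' R H ∘ₗ map τ τ) (hτc : comul ∘ₗ τ = map τ τ ∘ₗ comul)
    {m : ℕ} (hm : Even m) : ∀ n s t, Psi τ n s ∘ₗ Psi τ m t = Psi τ (n * m + n + m) (s ^^ t)
  | 0, s, t => by rw [Psi_zero_comp_Psi hτ hτm]; simp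
  | n + 1, s, t => by
    rw [Psi_succ, convProd_comp (comul_comp_Psi hτc m t), Psi_zero_comp_Psi hτ hτm,
      Psi_comp_Psi_of_cocomm hτ hτm hτc hm n, Bool.not_xor, convProd_Psi_of_even hm]
    congr 1; ring

end Psi

section Commutative

variable {R H : Type*} [CommRing R] [CommRing H] [Bialgebra R H] {τ : H →ₗ[R] H}

/- `m` is a coalgebra morphism, and an algebra morphism because `H` is commutative. -/
lemma convProd_comp_mul' {f g : H →ₗ[R] H}
    (hf : f ∘ₗ mul' R H = mul' R H ∘ₗ map f f) (hg : g ∘ₗ mul' R H = mul' R H ∘ₗ map g g) :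
    convProd f g ∘ₗ mul' R H = mul' R H ∘ₗ map (convProd f g) (convProd f g) :=
  calc convProd f g ∘ₗ mul' R H
      = ofConv (toConv (f ∘ₗ mul' R H) * toConv (g ∘ₗ mul' R H)) :=
        convMul_comp_coalgHom_distrib (toConv f) (toConv g) (Bialgebra.mulCoalgHom R H)
    _ = ofConv (toConv (mul' R H ∘ₗ map f f) * toConv (mul' R H ∘ₗ map g g)) := by rw [hf, hg]
    _ = mul' R H ∘ₗ ofConv (toConv (map f f) * toConv (map g g)) :=
        (algHom_comp_convMul_distrib (Algebra.TensorProduct.lmul' R) _ _).symm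
    _ = mul' R H ∘ₗ map (convProd f g) (convProd f g) := by rw [map_convMul_map]; rfl

lemma Psi_comp_mul' (hτm : τ ∘ₗ mul' R H = mul' R H ∘ₗ map τ τ) :
    ∀ n s, Psi τ n s ∘ₗ mul' R H = mul' R H ∘ₗ map (Psi τ n s) (Psi τ n s)
  | 0, false => by rw [Psi_zero_false, id_comp, map_id, comp_id]
  | 0, true => hτm
  | n + 1, s => by
    rw [Psi_succ]; exact convProd_comp_mul' (Psi_comp_mul' hτm 0 s) (Psi_comp_mul' hτm n !s)

lemma Psi_comp_Psi_of_comm (hτ : τ ∘ₗ τ = LinearMap.id)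
    (hτm : τ ∘ₗ mul' R H = mul' R H ∘ₗ map τ τ) (hτc : comul ∘ₗ τ = map τ τ ∘ₗ comul)
    {n : ℕ} (hn : Even n) : ∀ m s t, Psi τ n s ∘ₗ Psi τ m t = Psi τ (n * m + n + m) (s ^^ t)
  | 0, s, t => by rw [Psi_comp_Psi_zero hτ hτc]; simp
  | m + 1, s, t => by
    rw [Psi_succ, comp_convProd (Psi_comp_mul' hτm n s), Psi_comp_Psi_zero hτ hτc,
      Psi_comp_Psi_of_comm hτ hτm hτc hn m s, Bool.xor_not, convProd_Psi_of_even hn]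
    congr 1; ring

end Commutative

theorem hyperoctahedral_riffle_composition_general
    {R H : Type*} [CommRing R] [Ring H] [Bialgebra R H]
    (τ : H →ₗ[R] H)
    (hinv : ∀ x, τ (τ x) = x)
    (halgmul : ∀ x y : H, τ (x * y) = τ x * τ y)
    (hco : IsCoalgMorph τ)
    (a b : ℕ) (ha : 1 ≤ a) (hb : 1 ≤ b)
    (hcase :
      ((∀ x y : H, x * y = y * x) ∧ Odd a) ∨
      (((TensorProduct.comm R H H).toLinearMap ∘ₗ Coalgebra.comul =
          (Coalgebra.comul : H →ₗ[R] H ⊗[R] H)) ∧ Odd b)) :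
    PsiPlus τ a ∘ₗ PsiPlus τ b = PsiPlus τ (a * b) ∧
    PsiMinus τ a ∘ₗ PsiMinus τ b = PsiPlus τ (a * b) ∧
    PsiPlus τ a ∘ₗ PsiMinus τ b = PsiMinus τ (a * b) ∧
    PsiMinus τ a ∘ₗ PsiPlus τ b = PsiMinus τ (a * b) := by
  obtain ⟨n, rfl⟩ : ∃ n, a = n + 1 := ⟨a - 1, by omega⟩
  obtain ⟨m, rfl⟩ : ∃ m, b = m + 1 := ⟨b - 1, by omega⟩
  have hτ : τ ∘ₗ τ = LinearMap.id := LinearMap.ext hinv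
  have hτm : τ ∘ₗ mul' R H = mul' R H ∘ₗ map τ τ := TensorProduct.ext' halgmul
  suffices h : ∀ s t, Psi τ n s ∘ₗ Psi τ m t = Psi τ (n * m + n + m) (s ^^ t) by
    have hnm : (n + 1) * (m + 1) - 1 = n * m + n + m := by rw [add_one_mul, mul_add_one]; omega
    simp only [PsiPlus, PsiMinus, Nat.add_sub_cancel, hnm]
    exact ⟨h false false, h true true, h false true, h true false⟩
  rcases hcase with ⟨hcomm, ha⟩ | ⟨hcocomm, hb⟩
  · let _ : CommRing H := { ‹Ring H› with mul_comm := hcomm }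
    exact Psi_comp_Psi_of_comm hτ hτm hco.1 (by simpa [Nat.odd_add_one] using ha) m
  · have : IsCocomm R H := ⟨hcocomm⟩
    exact Psi_comp_Psi_of_cocomm hτ hτm hco.1 (by simpa [Nat.odd_add_one] using hb) n

/-- `τ` a linear involution on a bialgebra `H` that is both an algebra
morphism and a coalgebra morphism. If either `H` is commutative and `a` is odd, or `H` is
cocommutative and `b` is odd, then `Ψ_a^+ ∘ Ψ_b^+ = Ψ_a^− ∘ Ψ_b^− = Ψ_{ab}^+` and
`Ψ_a^+ ∘ Ψ_b^− = Ψ_a^− ∘ Ψ_b^+ = Ψ_{ab}^−`. -/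
theorem hyperoctahedral_riffle_composition
    {R H : Type*} [CommRing R] [Ring H] [Bialgebra R H]
    (τ : H →ₗ[R] H)
    (hinv : ∀ x, τ (τ x) = x)
    (halg1 : τ 1 = 1) (halgmul : ∀ x y : H, τ (x * y) = τ x * τ y)
    (hco : IsCoalgMorph τ)
    (a b : ℕ) (ha : 1 ≤ a) (hb : 1 ≤ b)
    (hcase :
      ((∀ x y : H, x * y = y * x) ∧ Odd a) ∨
      (((TensorProduct.comm R H H).toLinearMap ∘ₗ Coalgebra.comul =
          (Coalgebra.comul : H →ₗ[R] H ⊗[R] H)) ∧ Odd b)) :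
    PsiPlus τ a ∘ₗ PsiPlus τ b = PsiPlus τ (a * b) ∧
    PsiMinus τ a ∘ₗ PsiMinus τ b = PsiPlus τ (a * b) ∧
    PsiPlus τ a ∘ₗ PsiMinus τ b = PsiMinus τ (a * b) ∧
    PsiMinus τ a ∘ₗ PsiPlus τ b = PsiMinus τ (a * b) :=
  hyperoctahedral_riffle_composition_general τ hinv halgmul hco a b ha hb hcase
end

section
/- For all natural numbers n, k, k̄ with k + k̄ ≤ n, one has C(n, k, k̄) = 2^{n−k−k̄} · c(n, k+k̄) · binom(k+k̄, k). -/
/-- The order `≺` on signed letters: `x ≺ y` iff `|x| < |y|`, or `|x| = |y|` with `x`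
barred (negative) and `y` unbarred. -/
def SPrec (x y : ℤ) : Prop := x.natAbs < y.natAbs ∨ (x.natAbs = y.natAbs ∧ x < y)

/-- `w : Fin n → ℤ` is a signed permutation of `n`: each entry has absolute value in
`{1,…,n}` and the absolute values are pairwise distinct (hence a permutation of `1,…,n`);
in particular every entry is nonzero. -/
def IsSignedPerm {n : ℕ} (w : Fin n → ℤ) : Prop :=
  (∀ t, 1 ≤ (w t).natAbs ∧ (w t).natAbs ≤ n) ∧
    Function.Injective fun t => (w t).natAbs

/-- Position `t` is a left-to-right minimum of `w`: `w t ≺ w s` for all `s < t`. -/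
def IsLRMin {n : ℕ} (w : Fin n → ℤ) (t : Fin n) : Prop :=
  ∀ s, s < t → SPrec (w t) (w s)

/-- Position `t` lies in the Lyndon factor beginning at position `m`: `m ≤ t` and no
left-to-right minimum occurs strictly between `m` (exclusive) and `t` (inclusive). -/
def InFactor {n : ℕ} (w : Fin n → ℤ) (m t : Fin n) : Prop :=
  m ≤ t ∧ ∀ s, m < s → s ≤ t → ¬ IsLRMin w s

/-- The number of barred (negative) entries in the Lyndon factor of `w` beginning at `m`. -/
noncomputable def barredCount {n : ℕ} (w : Fin n → ℤ) (m : Fin n) : ℕ :=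
  Nat.card { t : Fin n // InFactor w m t ∧ w t < 0 }

/-- The number of Lyndon factors of `w` with an odd number of barred entries. -/
noncomputable def numOddFactors {n : ℕ} (w : Fin n → ℤ) : ℕ :=
  Nat.card { m : Fin n // IsLRMin w m ∧ Odd (barredCount w m) }

/-- The number of Lyndon factors of `w` with an even number of barred entries. -/
noncomputable def numEvenFactors {n : ℕ} (w : Fin n → ℤ) : ℕ :=
  Nat.card { m : Fin n // IsLRMin w m ∧ Even (barredCount w m) }

/-- `C(n, k, k̄)`: the number of signed permutations of `n` whose Lyndon factorization has
exactly `k` factors with an odd number of barred entries and exactly `k̄` factors with an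
even number of barred entries. -/
noncomputable def bigC (n k kb : ℕ) : ℕ :=
  Nat.card { w : Fin n → ℤ // IsSignedPerm w ∧ numOddFactors w = k ∧ numEvenFactors w = kb }

/-- `c(n, k)`: the signless Stirling number of the first kind, i.e. the number of
permutations of `(1,…,n)` with exactly `k` left-to-right minima. -/
noncomputable def littleC (n k : ℕ) : ℕ :=
  Nat.card { σ : Equiv.Perm (Fin n) //
    Nat.card { t : Fin n // ∀ s, s < t → σ t < σ s } = k }

/-!
Write a signed permutation as a permutation `σ` of the absolute values together with a sign
vector `ε`. Since the absolute values are distinct, the left-to-right minima, hence the Lyndon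
factors, depend only on `σ`. For fixed `σ` with `j` factors, resetting the sign of the first letter
of each factor to the parity of the signs of its whole factor is an involution on sign vectors, so
the `j` factor parities are free coordinates beside the `n - j` other signs: `binom(j, k) · 2^(n-j)`
sign vectors give `k` odd factors, and then `j - k` even ones. Summing over `σ` gives the formula.
-/

open Finset

section BlockParity

variable {α : Type*} [Fintype α] [DecidableEq α]

theorem card_filter_card_filter_eq_choose (k : ℕ) :
    #{p : α → Bool | #{a | p a} = k} = (Fintype.card α).choose k := by
  rw [← Fintype.card_subtype, ← Fintype.card_finset_len]
  exact Fintype.card_congr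
    { toFun := fun p => ⟨({a | p.1 a} : Finset α), p.2⟩
      invFun := fun s => ⟨fun a => a ∈ s.1, by simpa using s.2⟩
      left_inv := fun p => by ext; simp
      right_inv := fun s => by ext; simp }

theorem card_filter_card_filter_mem_eq_choose_mul_pow (M : Finset α) (k : ℕ) :
    #{ε : α → Bool | #{m ∈ M | ε m} = k} = (#M).choose k * 2 ^ (Fintype.card α - #M) := by
  have hM (ε : α → Bool) : #{m ∈ M | ε m} = #{m : M | ε m} := by
    rw [univ_eq_attach, filter_attach (fun a => ε a = true), card_map, card_attach]
  rw [← Fintype.card_subtype]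
  calc Fintype.card {ε : α → Bool // #{m ∈ M | ε m} = k}
      = Fintype.card {x : (M → Bool) × ({a // a ∉ M} → Bool) // #{m | x.1 m} = k} :=
        Fintype.card_congr <| (Equiv.piEquivPiSubtypeProd (· ∈ M) _).subtypeEquiv
          fun ε => by rw [hM]; rfl
    _ = #{p : M → Bool | #{m | p m} = k} * 2 ^ (Fintype.card α - #M) := by
        rw [Fintype.card_congr (Equiv.prodSubtypeFstEquivSubtypeProd
          (p := fun p : M → Bool => #{m | p m} = k)), Fintype.card_prod,
          Fintype.card_subtype, Fintype.card_fun, Fintype.card_bool, Fintype.card_subtype_compl,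
          Fintype.card_coe]
    _ = _ := by rw [card_filter_card_filter_eq_choose, Fintype.card_coe]

variable (M : Finset α) (B : α → α → Prop) [DecidableRel B]

/-- When `t ∈ M` is the only point of `M` in its block `{s | B t s}`, the new value at `t` is the
parity of `ε` on the whole block. -/
def blockParity (ε : α → Bool) (t : α) : Bool :=
  if t ∈ M then xor (ε t) (decide (Odd #{s | s ∉ M ∧ B t s ∧ ε s})) else ε t

theorem blockParity_involutive : Function.Involutive (blockParity M B) := by
  intro ε
  have hoff : ∀ s ∉ M, blockParity M B ε s = ε s := fun s hs => if_neg hs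
  funext t
  by_cases ht : t ∈ M
  · have hrest : #{s | s ∉ M ∧ B t s ∧ blockParity M B ε s} = #{s | s ∉ M ∧ B t s ∧ ε s} := by
      congr 1
      exact filter_congr fun s _ => and_congr_right fun hs => by rw [hoff s hs]
    rw [blockParity, if_pos ht, hrest]
    simp [blockParity, ht]
  · rw [blockParity, if_neg ht, hoff t ht]

theorem odd_card_block_iff (hrefl : ∀ m ∈ M, B m m) (hsep : ∀ m ∈ M, ∀ s ∈ M, B m s → s = m)
    (ε : α → Bool) {m : α} (hm : m ∈ M) :
    Odd #{t | B m t ∧ ε t} ↔ blockParity M B ε m = true := by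
  have hsplit : #{t | B m t ∧ ε t} = #{t | t ∉ M ∧ B m t ∧ ε t} + #{t ∈ {m} | ε t} := by
    rw [← card_filter_add_card_filter_not (s := {t | B m t ∧ ε t}) (p := (· ∉ M)), filter_filter]
    congr 2
    · ext t; simp only [mem_filter, mem_univ, true_and]; tauto
    · ext t
      simp only [mem_filter, mem_univ, true_and, not_not, mem_singleton]
      refine ⟨fun ⟨⟨hB, hε⟩, ht⟩ => ⟨hsep m hm t ht hB, hε⟩, ?_⟩
      rintro ⟨rfl, hε⟩
      exact ⟨⟨hrefl t hm, hε⟩, hm⟩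
  cases h : ε m <;> simp [blockParity, hm, hsplit, filter_singleton, h, Nat.odd_add_one]

theorem card_filter_card_filter_odd_eq_choose_mul_pow (hrefl : ∀ m ∈ M, B m m)
    (hsep : ∀ m ∈ M, ∀ s ∈ M, B m s → s = m) (k : ℕ) :
    #{ε : α → Bool | #{m ∈ M | Odd #{t | B m t ∧ ε t}} = k}
      = (#M).choose k * 2 ^ (Fintype.card α - #M) := by
  rw [← card_filter_card_filter_mem_eq_choose_mul_pow M k]
  refine card_equiv (blockParity_involutive M B).toPerm fun ε => ?_
  have hodd : {m ∈ M | Odd #{t | B m t ∧ ε t}} = {m ∈ M | blockParity M B ε m} :=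
    filter_congr fun m hm => odd_card_block_iff M B hrefl hsep ε hm
  simp [hodd]

end BlockParity

theorem Nat.card_subtype_eq_card_filter {β : Type*} [Fintype β] (p : β → Prop)
    [DecidablePred p] : Nat.card {x // p x} = #{x | p x} := by
  rw [Nat.card_eq_fintype_card, Fintype.card_subtype]

instance : DecidableRel SPrec := fun _ _ => inferInstanceAs (Decidable (_ ∨ _))

instance {n : ℕ} (w : Fin n → ℤ) : DecidablePred (IsLRMin w) :=
  fun _ => inferInstanceAs (Decidable (∀ _, _ → _))

instance {n : ℕ} (w : Fin n → ℤ) (m : Fin n) : DecidablePred (InFactor w m) :=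
  fun _ => inferInstanceAs (Decidable (_ ∧ _))

section LyndonFactor

variable {n : ℕ} (w : Fin n → ℤ)

theorem inFactor_self (m : Fin n) : InFactor w m m :=
  ⟨le_rfl, fun _ hms hsm => absurd hsm hms.not_ge⟩

theorem eq_of_inFactor_of_isLRMin {m s : Fin n} (h : InFactor w m s) (hs : IsLRMin w s) :
    s = m :=
  by_contra fun hne => h.2 s (lt_of_le_of_ne h.1 (Ne.symm hne)) le_rfl hs

theorem barredCount_eq_card (m : Fin n) :
    barredCount w m = #{t | InFactor w m t ∧ w t < 0} :=
  Nat.card_subtype_eq_card_filter _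

theorem numOddFactors_eq_card :
    numOddFactors w = #{m | IsLRMin w m ∧ Odd (barredCount w m)} :=
  Nat.card_subtype_eq_card_filter _

theorem numOddFactors_add_numEvenFactors :
    numOddFactors w + numEvenFactors w = #{m | IsLRMin w m} := by
  rw [numOddFactors_eq_card, numEvenFactors, Nat.card_subtype_eq_card_filter,
    ← card_filter_add_card_filter_not (s := {m | IsLRMin w m})
      (p := fun m => Odd (barredCount w m)), filter_filter, filter_filter]
  simp only [Nat.not_odd_iff_even]

end LyndonFactor

section SignedPerm

variable {n : ℕ}

def signedPerm (σ : Equiv.Perm (Fin n)) (ε : Fin n → Bool) (t : Fin n) : ℤ :=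
  if ε t then -((σ t : ℕ) + 1 : ℤ) else ((σ t : ℕ) + 1 : ℤ)

theorem natAbs_signedPerm (σ : Equiv.Perm (Fin n)) (ε : Fin n → Bool) (t : Fin n) :
    (signedPerm σ ε t).natAbs = σ t + 1 := by
  unfold signedPerm; split <;> omega

theorem signedPerm_neg_iff (σ : Equiv.Perm (Fin n)) (ε : Fin n → Bool) (t : Fin n) :
    signedPerm σ ε t < 0 ↔ ε t := by
  unfold signedPerm; split <;> simp_all <;> omega

theorem isSignedPerm_signedPerm (σ : Equiv.Perm (Fin n)) (ε : Fin n → Bool) :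
    IsSignedPerm (signedPerm σ ε) := by
  refine ⟨fun t => ?_, fun s t hst => σ.injective (Fin.ext ?_)⟩
  · have := (σ t).isLt
    rw [natAbs_signedPerm]; omega
  · simpa [natAbs_signedPerm] using hst

noncomputable def IsSignedPerm.absPerm {w : Fin n → ℤ} (hw : IsSignedPerm w) :
    Equiv.Perm (Fin n) :=
  Equiv.ofBijective (fun t => ⟨(w t).natAbs - 1, by have := hw.1 t; omega⟩) <|
    Finite.injective_iff_bijective.mp fun s t hst => hw.2 <|
      show (w s).natAbs = (w t).natAbs by
        have := hw.1 s; have := hw.1 t; simp only [Fin.mk.injEq] at hst; omega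

noncomputable def signedPermEquiv (n : ℕ) :
    Equiv.Perm (Fin n) × (Fin n → Bool) ≃ {w : Fin n → ℤ // IsSignedPerm w} where
  toFun p := ⟨signedPerm p.1 p.2, isSignedPerm_signedPerm p.1 p.2⟩
  invFun w := (w.2.absPerm, fun t => decide (w.1 t < 0))
  left_inv p := by
    ext t
    · simp [IsSignedPerm.absPerm, natAbs_signedPerm]
    · simp [signedPerm_neg_iff]
  right_inv w := by
    ext t
    have := (w.2.1 t).1
    simp only [signedPerm, IsSignedPerm.absPerm, Equiv.ofBijective_apply, decide_eq_true_eq]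
    split <;> omega

theorem sPrec_iff_of_natAbs_ne {x y : ℤ} (h : x.natAbs ≠ y.natAbs) :
    SPrec x y ↔ x.natAbs < y.natAbs := by
  simp [SPrec, h]

theorem isLRMin_signedPerm_iff (σ : Equiv.Perm (Fin n)) (ε : Fin n → Bool) (t : Fin n) :
    IsLRMin (signedPerm σ ε) t ↔ ∀ s, s < t → σ t < σ s := by
  refine forall₂_congr fun s hst => ?_
  have hne : σ t ≠ σ s := σ.injective.ne hst.ne'
  rw [sPrec_iff_of_natAbs_ne (by simpa [natAbs_signedPerm, Fin.val_eq_val] using hne),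
    natAbs_signedPerm, natAbs_signedPerm, Fin.lt_def]
  omega

theorem inFactor_signedPerm (σ : Equiv.Perm (Fin n)) (ε ε' : Fin n → Bool) :
    InFactor (signedPerm σ ε) = InFactor (signedPerm σ ε') := by
  funext m t
  simp only [InFactor, isLRMin_signedPerm_iff]

theorem numOddFactors_signedPerm (σ : Equiv.Perm (Fin n)) (ε ε' : Fin n → Bool) :
    numOddFactors (signedPerm σ ε) = #{m ∈ {m | IsLRMin (signedPerm σ ε') m} |
      Odd #{t | InFactor (signedPerm σ ε') m t ∧ ε t}} := by
  simp only [numOddFactors_eq_card, barredCount_eq_card, filter_filter, isLRMin_signedPerm_iff,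
    inFactor_signedPerm σ ε ε', signedPerm_neg_iff]

theorem card_isLRMin_signedPerm (σ : Equiv.Perm (Fin n)) (ε : Fin n → Bool) :
    #{m | IsLRMin (signedPerm σ ε) m} = #{t | ∀ s, s < t → σ t < σ s} := by
  simp only [isLRMin_signedPerm_iff]

theorem card_filter_numOddFactors_numEvenFactors (σ : Equiv.Perm (Fin n)) (k kb : ℕ) :
    #{ε | numOddFactors (signedPerm σ ε) = k ∧ numEvenFactors (signedPerm σ ε) = kb}
      = if #{t | ∀ s, s < t → σ t < σ s} = k + kb
        then (k + kb).choose k * 2 ^ (n - (k + kb)) else 0 := by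
  rw [← card_isLRMin_signedPerm σ fun _ => false]
  set w := signedPerm σ fun _ => false
  have hsum (ε : Fin n → Bool) :
      numOddFactors (signedPerm σ ε) + numEvenFactors (signedPerm σ ε) = #{m | IsLRMin w m} := by
    rw [numOddFactors_add_numEvenFactors, card_isLRMin_signedPerm, card_isLRMin_signedPerm]
  split_ifs with hM
  · have hodd : #{ε | numOddFactors (signedPerm σ ε) = k ∧ numEvenFactors (signedPerm σ ε) = kb}
        = #{ε : Fin n → Bool | #{m ∈ {m | IsLRMin w m} | Odd #{t | InFactor w m t ∧ ε t}} = k} :=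
      congrArg card <| filter_congr fun ε _ => by
        rw [← numOddFactors_signedPerm]
        have := hsum ε
        omega
    rw [hodd, card_filter_card_filter_odd_eq_choose_mul_pow, hM, Fintype.card_fin]
    · exact fun m _ => inFactor_self w m
    · intro m _ s hs hms
      exact eq_of_inFactor_of_isLRMin w hms (mem_filter.mp hs).2
  · rw [card_eq_zero, filter_eq_empty_iff]
    rintro ε - ⟨hk, hkb⟩
    exact hM (hk ▸ hkb ▸ (hsum ε).symm)

end SignedPerm

theorem littleC_eq_card (n j : ℕ) :
    littleC n j = #{σ : Equiv.Perm (Fin n) | #{t | ∀ s, s < t → σ t < σ s} = j} := by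
  simp only [littleC, Nat.card_subtype_eq_card_filter]

theorem bigC_eq_two_pow_mul_littleC_mul_choose_general (n k kb : ℕ) :
    bigC n k kb = 2 ^ (n - k - kb) * littleC n (k + kb) * Nat.choose (k + kb) k := by
  have hbig : bigC n k kb = #{p : Equiv.Perm (Fin n) × (Fin n → Bool) |
      numOddFactors (signedPerm p.1 p.2) = k ∧ numEvenFactors (signedPerm p.1 p.2) = kb} := by
    rw [bigC, ← Nat.card_congr (Equiv.subtypeSubtypeEquivSubtypeInter _ _),
      ← Nat.card_congr ((signedPermEquiv n).subtypeEquiv fun _ => Iff.rfl),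
      Nat.card_subtype_eq_card_filter]
    rfl
  rw [hbig, card_filter, Fintype.sum_prod_type]
  simp only [← card_filter, card_filter_numOddFactors_numEvenFactors]
  rw [← sum_filter, sum_const, smul_eq_mul, ← littleC_eq_card, Nat.sub_sub]
  ring

/-- `C(n, k, k̄) = 2^{n−k−k̄} · c(n, k+k̄) · binom(k+k̄, k)` whenever
`k + k̄ ≤ n`. -/
theorem bigC_eq_two_pow_mul_littleC_mul_choose (n k kb : ℕ) (h : k + kb ≤ n) :
    bigC n k kb = 2 ^ (n - k - kb) * littleC n (k + kb) * Nat.choose (k + kb) k :=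
  bigC_eq_two_pow_mul_littleC_mul_choose_general n k kb
end
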